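/- arXiv:1309.2685 — 5 statements merged into one kernel-verified Lean document; each statement's English description precedes it below -/
import Mathlib

section
/- If v is a complete valuation on the lattice L of downsets of a finite poset P, then for every y ∈ P we have v(↓y) = 1 + v(⋃_{x : v(↓x) < v(↓y)} ↓x), where ↓z denotes the principal downset of z. -/
open Finset

variable (P : Type*) [PartialOrder P] [Fintype P] [DecidableEq P]

/-- The lattice of downsets (lower sets) of a finite poset `P`. -/
def DownSet : Type _ := {A : Finset P // IsLowerSet (↑A : Set P)}

variable {P}

instance : Lattice (DownSet P) :=
  Subtype.lattice (fun _ _ hA hB => by simpa [Finset.sup_eq_union] using hA.union hB)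
    (fun _ _ hA hB => by simpa [Finset.inf_eq_inter] using hA.inter hB)

instance : OrderBot (DownSet P) :=
  Subtype.orderBot (by simp [Finset.bot_eq_empty, isLowerSet_empty])

noncomputable instance : Fintype (DownSet P) :=
  Fintype.ofInjective Subtype.val Subtype.val_injective

/-- The valuation associated to a weight function `w`. -/
def vval (w : P → ℕ) (A : DownSet P) : ℕ := ∑ x ∈ A.1, w x

variable [DecidableRel ((· ≤ ·) : P → P → Prop)]

/-- The principal downset of `y`. -/
def pd (y : P) : DownSet P :=
  ⟨univ.filter (· ≤ y), by
    intro a b hba ha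
    simp only [coe_filter, Set.mem_setOf_eq, mem_univ, true_and] at *
    exact hba.trans ha⟩

/-- The dual valuation evaluated on the principal upset of `x`. -/
def vup (w : P → ℕ) (x : P) : ℕ := ∑ z ∈ univ.filter (fun z => x ≤ z), w z

/-- `T` is an initial segment for the valuation `v`. -/
def Initial (v : DownSet P → ℕ) (T : Set (DownSet P)) : Prop :=
  ∃ j, v '' T = {k | k < j}

/-- `T` is a final segment for the valuation `v`. -/
def Final (v : DownSet P → ℕ) (T : Set (DownSet P)) : Prop :=
  ∃ j, v '' T = {k | j ≤ k ∧ k < Fintype.card (DownSet P)}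

/-- The set of arbitrary (nonempty) joins of elements of `T`. -/
def joinSet (T : Set (DownSet P)) : Set (DownSet P) :=
  {a | ∃ S : Finset (DownSet P), ↑S ⊆ T ∧ ∃ hS : S.Nonempty, a = S.sup' hS id}

/-- The set of arbitrary (nonempty) meets of elements of `T`. -/
def meetSet (T : Set (DownSet P)) : Set (DownSet P) :=
  {a | ∃ S : Finset (DownSet P), ↑S ⊆ T ∧ ∃ hS : S.Nonempty, a = S.inf' hS id}

/-- A complete valuation: bijective onto `{0,…,|L|-1}`, join-closures of initial segments
are initial segments, meet-closures of final segments are final segments. -/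
def IsCompleteValuation (w : P → ℕ) : Prop :=
  Set.BijOn (vval w) Set.univ {k | k < Fintype.card (DownSet P)} ∧
  (∀ T, Initial (vval w) T → Initial (vval w) (joinSet T)) ∧
  (∀ T, Final (vval w) T → Final (vval w) (meetSet T))

/-- The complementary order from two linear orders: `x ≤' y` iff `le1 x y` and `le2 y x`. -/
def le'' (le1 le2 : P → P → Prop) (x y : P) : Prop := le1 x y ∧ le2 y x

/-- The number of chains (under the complementary order) with maximum element `y`. -/
noncomputable def chainCount (le1 le2 : P → P → Prop) (y : P) : ℕ :=
  Set.ncard {C : Finset P | y ∈ C ∧ (∀ a ∈ C, le'' le1 le2 a y) ∧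
    ∀ a ∈ C, ∀ b ∈ C, le'' le1 le2 a b ∨ le'' le1 le2 b a}

/-- `{le1, le2}` is a realizer of `P`. -/
def IsRealizer (le1 le2 : P → P → Prop) : Prop :=
  IsLinearOrder P le1 ∧ IsLinearOrder P le2 ∧ ∀ x y : P, x ≤ y ↔ le1 x y ∧ le2 x y
lemma DownSet.le_iff {a b : DownSet P} : a ≤ b ↔ a.1 ⊆ b.1 := Iff.rfl

lemma vval_mono (w : P → ℕ) {a b : DownSet P} (hab : a ≤ b) : vval w a ≤ vval w b :=
  Finset.sum_le_sum_of_subset hab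

lemma mem_pd {z y : P} : z ∈ (pd y).1 ↔ z ≤ y := by simp [pd]

lemma pd_le_iff {y : P} {a : DownSet P} : pd y ≤ a ↔ y ∈ a.1 := by
  constructor
  · intro hle; exact hle (mem_pd.2 le_rfl)
  · intro hy z hz
    exact a.2 (mem_pd.1 hz) hy

lemma coe_sup (a b : DownSet P) : (a ⊔ b).1 = a.1 ∪ b.1 := by
  show a.1 ⊔ b.1 = a.1 ∪ b.1
  simp [Finset.sup_eq_union]

lemma coe_bot : (⊥ : DownSet P).1 = (∅ : Finset P) := rfl

lemma mem_sup' {S : Finset (DownSet P)} (hS : S.Nonempty) {z : P}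
    (hz : z ∈ (S.sup' hS id).1) : ∃ e ∈ S, z ∈ e.1 := by
  refine Finset.sup'_induction hS id (p := fun b => z ∈ b.1 → ∃ e ∈ S, z ∈ e.1) ?_ ?_ hz
  · intro a ha b hb hab
    rw [coe_sup, Finset.mem_union] at hab
    rcases hab with h' | h'
    exacts [ha h', hb h']
  · intro e he hz; exact ⟨e, he, hz⟩

lemma vval_bot (w : P → ℕ) : vval w (⊥ : DownSet P) = 0 := rfl

/-- For a complete valuation, `v(↓y) = 1 + v(⋃_{x : v(↓x) < v(↓y)} ↓x)`. -/
theorem stmt1 (w : P → ℕ) (h : IsCompleteValuation w) (y : P) :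
    vval w (pd y) =
      1 + vval w ((univ.filter fun x => vval w (pd x) < vval w (pd y)).sup pd) := by
  classical
  obtain ⟨hbij, hjoin, -⟩ := h
  set v := vval w with hv
  set m := v (pd y) with hm
  have hinj : ∀ a b : DownSet P, v a = v b → a = b := fun a b hab =>
    hbij.injOn (Set.mem_univ a) (Set.mem_univ b) hab
  have hmlt : m < Fintype.card (DownSet P) := hbij.mapsTo (Set.mem_univ _)
  have hmpos : 0 < m := by
    rcases Nat.eq_zero_or_pos m with h0 | h0
    · exfalso
      have hb : pd y = ⊥ := hinj _ _ (by rw [show v ⊥ = 0 from rfl]; exact h0)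
      have hy : y ∈ (⊥ : DownSet P).1 := hb ▸ mem_pd.2 le_rfl
      exact (Finset.notMem_empty y) ((coe_bot (P := P)) ▸ hy)
    · exact h0
  -- T is an initial segment
  set T : Set (DownSet P) := {a | v a < m} with hTdef
  have hTinit : Initial v T := by
    refine ⟨m, ?_⟩
    ext k
    constructor
    · rintro ⟨a, ha, rfl⟩; exact ha
    · intro hk
      obtain ⟨a, -, ha⟩ := hbij.surjOn
        (show k ∈ {k | k < Fintype.card (DownSet P)} from lt_trans hk hmlt)
      refine ⟨a, ?_, ha⟩
      simp only [hTdef, Set.mem_setOf_eq, ha]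
      exact hk
  obtain ⟨j, hj⟩ := hjoin T hTinit
  -- the finset of all downsets with value < m, and its sup B
  set S : Finset (DownSet P) := univ.filter (fun a => v a < m) with hSdef
  have hS : S.Nonempty := ⟨⊥, by simp [hSdef, hv, vval_bot, hmpos]⟩
  set B : DownSet P := S.sup' hS id with hBdef
  have hBmem : B ∈ joinSet T := ⟨S, by intro a ha; simpa [hSdef, hTdef] using ha, hS, rfl⟩
  -- G = B
  set G : DownSet P := (univ.filter fun x => v (pd x) < m).sup pd with hGdef
  have hGB : G = B := by
    apply le_antisymm
    · apply Finset.sup_le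
      intro x hx
      simp only [mem_filter, mem_univ, true_and] at hx
      exact Finset.le_sup' (id : DownSet P → DownSet P)
        (Finset.mem_filter.2 ⟨mem_univ (pd x), hx⟩)
    · apply Finset.sup'_le
      intro a ha
      simp only [hSdef, mem_filter, mem_univ, true_and] at ha
      intro z hz
      have hpz : v (pd z) < m := lt_of_le_of_lt (vval_mono w (pd_le_iff.2 hz)) ha
      have : pd z ≤ G := Finset.le_sup (Finset.mem_filter.2 ⟨mem_univ _, hpz⟩)
      exact this (mem_pd.2 le_rfl)
  -- every element of joinSet T is ≤ B
  have hle : ∀ a ∈ joinSet T, a ≤ B := by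
    rintro a ⟨S', hS'T, hS', rfl⟩
    apply Finset.sup'_le
    intro e he
    have : v e < m := hS'T he
    exact Finset.le_sup' (id : DownSet P → DownSet P)
      (Finset.mem_filter.2 ⟨mem_univ e, this⟩)
  -- j = v B + 1
  have hvBlt : v B < j := by
    have : v B ∈ v '' joinSet T := ⟨B, hBmem, rfl⟩
    rw [hj] at this; exact this
  have hjle : j ≤ v B + 1 := by
    by_contra hc
    push_neg at hc
    have : v B + 1 ∈ v '' joinSet T := by rw [hj]; exact hc
    obtain ⟨a, ha, hav⟩ := this
    have hab := vval_mono w (hle a ha)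
    rw [← hv] at hab
    omega
  -- m ≤ j
  have hmj : m ≤ j := by
    have hm1 : m - 1 ∈ v '' joinSet T := by
      obtain ⟨a, -, ha⟩ := hbij.surjOn (show m - 1 ∈ {k | k < Fintype.card (DownSet P)} by
        simp only [Set.mem_setOf_eq]; omega)
      refine ⟨a, ⟨{a}, ?_, Finset.singleton_nonempty a, by simp⟩, ha⟩
      intro e he
      simp only [Finset.coe_singleton, Set.mem_singleton_iff] at he
      subst he
      simp only [hTdef, Set.mem_setOf_eq]; omega
    rw [hj] at hm1
    simp only [Set.mem_setOf_eq] at hm1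
    omega
  -- j ≤ m
  have hjm : j ≤ m := by
    by_contra hc
    push_neg at hc
    have : m ∈ v '' joinSet T := by rw [hj]; exact hc
    obtain ⟨a, ha, hav⟩ := this
    have haeq : a = pd y := hinj _ _ hav
    have hyB : y ∈ B.1 := (hle a ha) (haeq ▸ mem_pd.2 le_rfl)
    obtain ⟨e, he, hye⟩ := mem_sup' hS hyB
    simp only [hSdef, mem_filter, mem_univ, true_and] at he
    have hme : vval w (pd y) ≤ vval w e := vval_mono w (pd_le_iff.2 hye)
    rw [← hv] at hme
    omega
  rw [hGB]
  omega
end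

section
/- Let P be a finite poset with a realizer {Λ₁, Λ₂} of two linear orders, and let Q be the complementary poset with order x ≤' y iff x ≤ y in Λ₁ and y ≤ x in Λ₂ (or x = y). Define w(x) to be the number of chains in Q with maximum element x. Then the valuation v on the downset lattice L of P defined by v(A) = Σ_{x∈A} w(x) is a bijection from L onto {0, 1, …, |L| - 1}. -/
open Finset

variable (P : Type*) [PartialOrder P] [Fintype P] [DecidableEq P]

variable {P}

variable [DecidableRel ((· ≤ ·) : P → P → Prop)]

/-!
Since `{Λ₁, Λ₂}` realizes `P`, two distinct elements are incomparable in `P` exactly when they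
are comparable in `Q`, so the antichains of `P` are the chains of `Q`. Taking maximal elements
identifies downsets with antichains, hence `|L|` is the number of chains of `Q`, which is
`1 + ∑ x, w x = 1 + v P` after sorting the nonempty chains by their maximum.

It remains to see that `v` takes every value below `v P`. If `x` is the `Λ₂`-largest element of
a nonempty downset `A`, then `(A \ {x}) ∪ {z | z <' x}` is again a downset, and since
`w x = 1 + ∑ z <' x, w z` (remove `x` from a chain with maximum `x`), its valuation is `v A - 1`.
-/

section Chains

variable {α : Type*} {r : α → α → Prop}

theorem Finset.Nonempty.exists_forall_rel_of_chain [IsPreorder α r] {C : Finset α}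
    (hC : C.Nonempty) (hchain : ∀ a ∈ C, ∀ b ∈ C, r a b ∨ r b a) :
    ∃ m ∈ C, ∀ a ∈ C, r a m := by
  have : Nonempty C := hC.to_subtype
  have hdir : Directed r (fun a : C => (a : α)) := fun a b =>
    (hchain a a.2 b b.2).elim (fun hab => ⟨b, hab, refl_of r _⟩)
      (fun hba => ⟨a, refl_of r _, hba⟩)
  obtain ⟨m, hm⟩ := hdir.finset_le univ
  exact ⟨m, m.2, fun a ha => hm ⟨a, ha⟩ (mem_univ _)⟩

variable [Fintype α] [DecidableEq α] (r) [DecidableRel r]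

def chains : Finset (Finset α) :=
  univ.filter fun C => ∀ a ∈ C, ∀ b ∈ C, r a b ∨ r b a

def chainsWithMax (y : α) : Finset (Finset α) :=
  (chains r).filter fun C => y ∈ C ∧ ∀ a ∈ C, r a y

variable {r}

theorem filter_chains_eq_insert_biUnion [IsPreorder α r] (p : α → Prop) [DecidablePred p]
    (hp : ∀ a b, r a b → p b → p a) :
    (chains r).filter (fun C => ∀ a ∈ C, p a) =
      insert ∅ ((univ.filter p).biUnion (chainsWithMax r)) := by
  ext C
  simp only [chains, chainsWithMax, mem_filter, mem_univ, true_and, mem_insert, mem_biUnion]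
  constructor
  · rintro ⟨hchain, hpC⟩
    obtain rfl | hC := C.eq_empty_or_nonempty
    · exact .inl rfl
    · obtain ⟨m, hm, hmax⟩ := hC.exists_forall_rel_of_chain hchain
      exact .inr ⟨m, hpC m hm, hchain, hm, hmax⟩
  · rintro (rfl | ⟨y, hy, hchain, -, hmax⟩)
    · simp
    · exact ⟨hchain, fun a ha => hp a y (hmax a ha) hy⟩

theorem card_filter_chains [IsPartialOrder α r] (p : α → Prop) [DecidablePred p]
    (hp : ∀ a b, r a b → p b → p a) :
    #((chains r).filter (fun C => ∀ a ∈ C, p a)) =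
      1 + ∑ y ∈ univ.filter p, #(chainsWithMax r y) := by
  have hdisj : Set.PairwiseDisjoint ↑(univ.filter p) (chainsWithMax r) := by
    intro y _ z _ hyz
    refine disjoint_left.2 fun C hy hz => hyz ?_
    simp only [chainsWithMax, mem_filter] at hy hz
    exact antisymm_of r (hz.2.2 y hy.2.1) (hy.2.2 z hz.2.1)
  have hne : ∅ ∉ (univ.filter p).biUnion (chainsWithMax r) := by
    simp [chainsWithMax]
  rw [filter_chains_eq_insert_biUnion p hp, card_insert_of_notMem hne, card_biUnion hdisj, add_comm]

theorem card_chains [IsPartialOrder α r] : #(chains r) = 1 + ∑ y, #(chainsWithMax r y) := by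
  simpa using card_filter_chains (r := r) (fun _ => True) (fun _ _ _ _ => trivial)

theorem card_chainsWithMax [IsPartialOrder α r] (y : α) :
    #(chainsWithMax r y) =
      1 + ∑ z ∈ univ.filter (fun z => r z y ∧ z ≠ y), #(chainsWithMax r z) := by
  have hp : ∀ a b, r a b → r b y ∧ b ≠ y → r a y ∧ a ≠ y := by
    rintro a b hab ⟨hby, hb⟩
    exact ⟨trans_of r hab hby, fun hay => hb (antisymm_of r hby (hay ▸ hab))⟩
  rw [← card_filter_chains _ hp]
  refine card_nbij' (fun C => C.erase y) (insert y) (fun C hC => ?_) (fun C hC => ?_)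
    (fun C hC => insert_erase (mem_filter.1 hC).2.1) (fun C hC => erase_insert ?_)
  · simp only [chainsWithMax, chains, mem_coe, mem_filter, mem_univ, true_and, mem_erase]
      at hC ⊢
    obtain ⟨hchain, -, hmax⟩ := hC
    exact ⟨fun a ha b hb => hchain a ha.2 b hb.2, fun a ha => ⟨hmax a ha.2, ha.1⟩⟩
  · simp only [chainsWithMax, chains, mem_coe, mem_filter, mem_univ, true_and,
      mem_insert, forall_eq_or_imp] at hC ⊢
    obtain ⟨hchain, hlt⟩ := hC
    exact ⟨⟨⟨.inl (refl_of r y), fun b hb => .inr (hlt b hb).1⟩,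
      fun a ha => ⟨.inl (hlt a ha).1, hchain a ha⟩⟩, .inl trivial, refl_of r y,
      fun a ha => (hlt a ha).1⟩
  · exact fun hy => (mem_filter.1 hC).2 y hy |>.2 rfl

end Chains

theorem exists_apply_eq_of_le_of_forall_exists_add_one {β : Type*} {f : β → ℕ}
    (hf : ∀ b, f b ≠ 0 → ∃ c, f c + 1 = f b) (b : β) {k : ℕ} (hk : k ≤ f b) :
    ∃ c, f c = k := by
  obtain ⟨n, hn⟩ := Nat.exists_eq_add_of_le hk
  induction n generalizing b with
  | zero => exact ⟨b, hn⟩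
  | succ n ih =>
    obtain ⟨c, hc⟩ := hf b (by omega)
    exact ih c (by omega) (by omega)

section DownSet

variable {α : Type*} [PartialOrder α] [Fintype α]

open Classical in
noncomputable def DownSet.equivAntichain :
    DownSet α ≃ {s : Finset α // IsAntichain (· ≤ ·) (s : Set α)} where
  toFun A := ⟨univ.filter (Maximal (· ∈ A.1)), by
    simpa using setOfPred_maximal_antichain (· ∈ A.1)⟩
  invFun s := ⟨univ.filter (· ∈ lowerClosure (s : Set α)), by
    convert (lowerClosure (s : Set α)).lower using 1
    ext
    simp⟩
  left_inv A := by
    refine Subtype.ext (Finset.ext fun y => ?_)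
    simp only [mem_filter, mem_univ, true_and, mem_lowerClosure, coe_filter, Set.mem_ofPred_eq]
    refine ⟨fun ⟨x, hx, hyx⟩ => A.2 hyx hx.prop, fun hy => ?_⟩
    obtain ⟨x, hyx, hx⟩ := A.1.exists_le_maximal hy
    exact ⟨x, hx, hyx⟩
  right_inv s := by
    refine Subtype.ext (Finset.ext fun x => ?_)
    simp only [mem_filter, mem_univ, true_and]
    exact s.2.maximal_mem_lowerClosure_iff_mem

theorem vval_bijOn_of_exists_add_one [DecidableEq α] {w : α → ℕ}
    (hcard : Fintype.card (DownSet α) = ∑ x, w x + 1)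
    (hpred : ∀ A : DownSet α, A.1.Nonempty → ∃ B, vval w B + 1 = vval w A) :
    Set.BijOn (vval w) Set.univ {k | k < Fintype.card (DownSet α)} := by
  let top : DownSet α := ⟨univ, by simp [isLowerSet_univ]⟩
  have hle (A : DownSet α) : vval w A ≤ ∑ x, w x := sum_le_sum_of_subset (subset_univ _)
  have hmaps : Set.MapsTo (vval w) Set.univ {k | k < Fintype.card (DownSet α)} := fun A _ => by
    have := hle A
    simp only [Set.mem_ofPred_eq, hcard]
    omega
  have hsurj : Set.SurjOn (vval w) Set.univ {k | k < Fintype.card (DownSet α)} := fun k hk => by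
    rw [Set.mem_ofPred_eq, hcard, Nat.lt_succ_iff] at hk
    obtain ⟨B, hB⟩ := exists_apply_eq_of_le_of_forall_exists_add_one
      (fun A hA => hpred A (nonempty_of_sum_ne_zero hA)) top hk
    exact ⟨B, trivial, hB⟩
  refine ⟨hmaps, ?_, hsurj⟩
  simpa using injOn_of_surjOn_of_card_le (s := univ) (t := range (Fintype.card (DownSet α)))
    (vval w) (by rw [coe_univ, coe_range]; exact hmaps)
    (by rw [coe_univ, coe_range]; exact hsurj) (by simp)

end DownSet

section Realizer

variable {α : Type*} {le1 le2 : α → α → Prop}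

instance [IsPartialOrder α le1] [IsPartialOrder α le2] : IsPartialOrder α (le'' le1 le2) where
  refl a := ⟨refl_of le1 a, refl_of le2 a⟩
  trans _ _ _ hab hbc := ⟨trans_of le1 hab.1 hbc.1, trans_of le2 hbc.2 hab.2⟩
  antisymm _ _ hab hba := antisymm_of le1 hab.1 hba.1

section Count

variable [Fintype α] [DecidableEq α] [DecidableRel (le'' le1 le2)]

theorem chainCount_eq_card_chainsWithMax (y : α) :
    chainCount le1 le2 y = #(chainsWithMax (le'' le1 le2) y) := by
  rw [chainCount, ← Set.ncard_coe_finset]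
  congr 1
  ext C
  simp only [chainsWithMax, chains, coe_filter, mem_filter, mem_univ, true_and,
    Set.mem_ofPred_eq]
  tauto

theorem chainCount_eq_one_add_sum [IsPartialOrder α le1] [IsPartialOrder α le2] (y : α) :
    chainCount le1 le2 y =
      1 + ∑ z ∈ univ.filter (fun z => le'' le1 le2 z y ∧ z ≠ y), chainCount le1 le2 z := by
  simp only [chainCount_eq_card_chainsWithMax]
  exact card_chainsWithMax y

end Count

variable [PartialOrder α]

theorem IsRealizer.le''_or_le''_iff (h : IsRealizer le1 le2) {a b : α} (hab : a ≠ b) :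
    le'' le1 le2 a b ∨ le'' le1 le2 b a ↔ ¬ a ≤ b ∧ ¬ b ≤ a := by
  obtain ⟨_, _, hle⟩ := h
  simp only [le'', hle]
  constructor
  · rintro (⟨h1, h2⟩ | ⟨h1, h2⟩)
    · exact ⟨fun h' => hab (antisymm_of le2 h'.2 h2), fun h' => hab (antisymm_of le1 h1 h'.1)⟩
    · exact ⟨fun h' => hab (antisymm_of le1 h'.1 h1), fun h' => hab (antisymm_of le2 h2 h'.2)⟩
  · rintro ⟨hnab, hnba⟩
    rcases total_of le1 a b with h1 | h1
    · exact .inl ⟨h1, (total_of le2 b a).resolve_right fun h2 => hnab ⟨h1, h2⟩⟩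
    · exact .inr ⟨h1, (total_of le2 a b).resolve_right fun h2 => hnba ⟨h1, h2⟩⟩

theorem IsRealizer.isAntichain_iff (h : IsRealizer le1 le2) {s : Set α} :
    IsAntichain (· ≤ ·) s ↔
      ∀ a ∈ s, ∀ b ∈ s, le'' le1 le2 a b ∨ le'' le1 le2 b a := by
  have := h.1
  have := h.2.1
  refine ⟨fun hs a ha b hb => ?_,
    fun hs a ha b hb hab => ((h.le''_or_le''_iff hab).1 (hs a ha b hb)).1⟩
  obtain rfl | hab := eq_or_ne a b
  · exact .inl (refl_of _ a)
  · exact (h.le''_or_le''_iff hab).2 ⟨hs ha hb hab, hs hb ha hab.symm⟩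

variable [Fintype α] [DecidableEq α] [DecidableRel (le'' le1 le2)]

theorem IsRealizer.card_downSet (h : IsRealizer le1 le2) :
    Fintype.card (DownSet α) = #(chains (le'' le1 le2)) := by
  rw [← Nat.card_eq_fintype_card, Nat.card_congr DownSet.equivAntichain,
    ← Nat.card_eq_finsetCard]
  exact Nat.card_congr (Equiv.subtypeEquivRight fun s => by simp [chains, h.isAntichain_iff])

theorem IsRealizer.isLowerSet_erase_union (h : IsRealizer le1 le2) {A : Finset α}
    (hA : IsLowerSet (A : Set α)) {x : α} (hx : x ∈ A) (hmax : ∀ a ∈ A, le2 a x) :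
    IsLowerSet
      (↑(A.erase x ∪ univ.filter (fun z => le'' le1 le2 z x ∧ z ≠ x)) : Set α) := by
  obtain ⟨_, _, hle⟩ := h
  intro a b hba ha
  simp only [mem_coe, mem_union, mem_erase, mem_filter, mem_univ, true_and] at ha ⊢
  unfold le'' at ha ⊢
  rcases ha with ⟨hax, haA⟩ | ⟨⟨h1ax, -⟩, hax⟩
  · refine .inl ⟨?_, hA hba haA⟩
    rintro rfl
    exact hax (antisymm_of le2 (hmax a haA) ((hle _ _).1 hba).2)
  · have h1ba := ((hle _ _).1 hba).1
    have h1bx := trans_of le1 h1ba h1ax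
    have hbx : b ≠ x := by
      rintro rfl
      exact hax (antisymm_of le1 h1ax h1ba)
    rcases total_of le2 b x with h2bx | h2xb
    · exact .inl ⟨hbx, hA ((hle b x).2 ⟨h1bx, h2bx⟩) hx⟩
    · exact .inr ⟨⟨h1bx, h2xb⟩, hbx⟩

theorem IsRealizer.exists_vval_add_one (h : IsRealizer le1 le2) (A : DownSet α)
    (hA : A.1.Nonempty) : ∃ B, vval (chainCount le1 le2) B + 1 = vval (chainCount le1 le2) A := by
  have := h.1
  have := h.2.1
  obtain ⟨x, hxA, hmax⟩ := hA.exists_forall_rel_of_chain fun a _ b _ => total_of le2 a b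
  set D := univ.filter fun z => le'' le1 le2 z x ∧ z ≠ x
  have hdisj : Disjoint (A.1.erase x) D := disjoint_left.2 fun a ha haD =>
    have ⟨_, ⟨_, h2xa⟩, hax⟩ := mem_filter.1 haD
    hax (antisymm_of le2 (hmax a (mem_of_mem_erase ha)) h2xa)
  refine ⟨⟨A.1.erase x ∪ D, h.isLowerSet_erase_union A.2 hxA hmax⟩, ?_⟩
  unfold vval
  rw [sum_union hdisj, ← add_sum_erase _ _ hxA, chainCount_eq_one_add_sum x]
  ring

end Realizer

/-- For a realizer `{Λ₁, Λ₂}`, the valuation with weights counting chains in the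
complementary poset is a bijection onto `{0,…,|L|-1}`. -/
theorem stmt8 (le1 le2 : P → P → Prop) (h : IsRealizer le1 le2) :
    Set.BijOn (vval (chainCount le1 le2)) Set.univ
      {k | k < Fintype.card (DownSet P)} := by
  classical
  have := h.1
  have := h.2.1
  refine vval_bijOn_of_exists_add_one ?_ h.exists_vval_add_one
  simp only [h.card_downSet, card_chains, chainCount_eq_card_chainsWithMax, add_comm]
end

section
/- Every finite poset of order dimension at most 2 has a downset lattice admitting a bijective valuation, i.e., a function v : L → ℕ of the form v(A) = Σ_{x∈A} w(x) for some w : P → ℕ, which is a bijection onto {0,…,|L|-1}. -/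
open Finset

variable (P : Type*) [PartialOrder P] [Fintype P] [DecidableEq P]

variable {P}

variable [DecidableRel ((· ≤ ·) : P → P → Prop)]

/-!
Let `x` be the least element of `S` for `le2`. It is minimal in `S`, so a lower set of `S` either
avoids `x`, and then is a lower set of `W = {a ∈ S | ¬ x ≤ a}`, or is `insert x E` for a lower set
`E` of `S \ {x}`. Weigh `y` by the number of lower sets of `{a ∈ S | a ≠ y, le1 a y, le2 y a}`.
The weights of the elements of `W` and of `S \ {x}` are then the ones computed inside these
subposets, and `x` weighs exactly the number `m` of lower sets of `W`. By induction, the valuation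
maps the lower sets of `W` onto `[0, m)` and those containing `x` onto `m + [0, n)`, where `n`
counts the lower sets of `S \ {x}`; together they fill `[0, m + n)`.
-/

lemma Finset.Nonempty.exists_forall_rel {α : Type*} (r : α → α → Prop) [IsTrans α r]
    [Std.Total r] {S : Finset α} (hS : S.Nonempty) : ∃ x ∈ S, ∀ y ∈ S, r x y := by
  induction hS using Finset.Nonempty.cons_induction with
  | singleton a => exact ⟨a, mem_singleton_self a, by simp [refl_of r a]⟩
  | cons a s _ _ ih =>
    obtain ⟨x, hx, hmin⟩ := ih
    rcases total_of r a x with hax | hxa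
    · exact ⟨a, mem_cons_self a s,
        (forall_mem_cons _ _).2 ⟨refl_of r a, fun y hy => trans_of r hax (hmin y hy)⟩⟩
    · exact ⟨x, mem_cons_of_mem hx, (forall_mem_cons _ _).2 ⟨hxa, hmin⟩⟩

section LowerSubsets

variable {α : Type*} [PartialOrder α] [DecidableEq α] [DecidableRel ((· ≤ ·) : α → α → Prop)]

def lowerSubsets (S : Finset α) : Finset (Finset α) :=
  S.powerset.filter fun A => ∀ a ∈ S, ∀ b ∈ A, a ≤ b → a ∈ A

lemma mem_lowerSubsets {S A : Finset α} :
    A ∈ lowerSubsets S ↔ A ⊆ S ∧ ∀ a ∈ S, ∀ b ∈ A, a ≤ b → a ∈ A := by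
  rw [lowerSubsets, mem_filter, mem_powerset]

lemma lowerSubsets_empty : lowerSubsets (∅ : Finset α) = {∅} := by
  ext A
  simp [mem_lowerSubsets]

lemma mem_lowerSubsets_univ [Fintype α] {A : Finset α} :
    A ∈ lowerSubsets univ ↔ IsLowerSet (A : Set α) := by
  simp only [mem_lowerSubsets, subset_univ, mem_univ, forall_const, true_and, IsLowerSet, mem_coe]
  exact ⟨fun h a b hba ha => h b a ha hba, fun h a b hb hab => h hab hb⟩

lemma filter_notMem_lowerSubsets {S : Finset α} {x : α} (hx : x ∈ S) :
    (lowerSubsets S).filter (x ∉ ·) = lowerSubsets (S.filter (¬ x ≤ ·)) := by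
  ext D
  simp only [mem_filter, mem_lowerSubsets, subset_iff]
  constructor
  · rintro ⟨⟨hDS, hD⟩, hxD⟩
    exact ⟨fun b hb => ⟨hDS hb, fun hxb => hxD (hD x hx b hb hxb)⟩,
      fun a ha b hb hab => hD a ha.1 b hb hab⟩
  · rintro ⟨hDW, hD⟩
    refine ⟨⟨fun b hb => (hDW hb).1, fun a ha b hb hab => hD a ⟨ha, ?_⟩ b hb hab⟩,
      fun hxD => (hDW hxD).2 le_rfl⟩
    exact fun hxa => (hDW hb).2 (hxa.trans hab)

lemma filter_mem_lowerSubsets {S : Finset α} {x : α} (hx : x ∈ S)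
    (hmin : ∀ a ∈ S, a ≤ x → a = x) :
    (lowerSubsets S).filter (x ∈ ·) = (lowerSubsets (S.erase x)).image (insert x) := by
  ext D
  simp only [mem_filter, mem_image, mem_lowerSubsets]
  constructor
  · rintro ⟨⟨hDS, hD⟩, hxD⟩
    refine ⟨D.erase x, ⟨erase_subset_erase x hDS, fun a ha b hb hab => ?_⟩, insert_erase hxD⟩
    exact mem_erase.2 ⟨(mem_erase.1 ha).1, hD a (mem_of_mem_erase ha) b (mem_of_mem_erase hb) hab⟩
  · rintro ⟨E, ⟨hES, hE⟩, rfl⟩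
    refine ⟨⟨insert_subset hx (hES.trans (erase_subset x S)), fun a ha b hb hab => ?_⟩,
      mem_insert_self x E⟩
    rcases mem_insert.1 hb with rfl | hb
    · exact hmin a ha hab ▸ mem_insert_self a E
    · by_cases hax : a = x
      · exact hax ▸ mem_insert_self a E
      · exact mem_insert_of_mem (hE a (mem_erase.2 ⟨hax, ha⟩) b hb hab)

lemma insert_injOn_lowerSubsets_erase (S : Finset α) (x : α) :
    Set.InjOn (insert x) (lowerSubsets (S.erase x) : Set (Finset α)) := by
  have hx : ∀ E ∈ lowerSubsets (S.erase x), x ∉ E :=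
    fun E hE hxE => notMem_erase x S ((mem_lowerSubsets.1 hE).1 hxE)
  intro E hE F hF h
  rw [← erase_insert (hx E hE), ← erase_insert (hx F hF)]
  exact congrArg (erase · x) h

lemma card_lowerSubsets_eq_add {S : Finset α} {x : α} (hx : x ∈ S)
    (hmin : ∀ a ∈ S, a ≤ x → a = x) :
    #(lowerSubsets S) = #(lowerSubsets (S.filter (¬ x ≤ ·))) + #(lowerSubsets (S.erase x)) := by
  rw [← card_filter_add_card_filter_not (x ∉ ·), filter_notMem_lowerSubsets hx]
  simp only [not_not]
  rw [filter_mem_lowerSubsets hx hmin, card_image_of_injOn (insert_injOn_lowerSubsets_erase S x)]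

end LowerSubsets

section Realizer

variable {α : Type*} [PartialOrder α] [DecidableEq α] [DecidableRel ((· ≤ ·) : α → α → Prop)]
  (le1 le2 : α → α → Prop) [DecidableRel le1] [DecidableRel le2]

/-- For `S = univ` this is the paper's weight `chainCount le1 le2 y`: a chain of `le''` with top
`y` is `y` together with an antichain of the poset among the `a ≠ y` with `le'' le1 le2 a y`, and
antichains correspond to the lower sets they generate. -/
def weight (S : Finset α) (y : α) : ℕ :=
  #(lowerSubsets (S.filter fun a => a ≠ y ∧ le1 a y ∧ le2 y a))

variable {le1 le2}

lemma weight_congr {S T : Finset α} {y : α}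
    (h : ∀ a, a ≠ y → le1 a y ∧ le2 y a → (a ∈ S ↔ a ∈ T)) :
    weight le1 le2 S y = weight le1 le2 T y := by
  unfold weight
  congr 2
  ext a
  simp only [mem_filter]
  constructor
  · exact fun ⟨ha, hy⟩ => ⟨(h a hy.1 hy.2).1 ha, hy⟩
  · exact fun ⟨ha, hy⟩ => ⟨(h a hy.1 hy.2).2 ha, hy⟩

section

variable {S : Finset α} {x : α} (hx : ∀ y ∈ S, le2 x y)
include hx

lemma weight_erase [Std.Antisymm le2] {y : α} (hy : y ∈ S.erase x) :
    weight le1 le2 S y = weight le1 le2 (S.erase x) y := by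
  refine weight_congr fun a _ hay => ?_
  rw [mem_erase, iff_and_self]
  rintro - rfl
  exact (mem_erase.1 hy).1 (antisymm_of le2 (hx y (mem_of_mem_erase hy)) hay.2).symm

variable (hle : ∀ x y : α, x ≤ y ↔ le1 x y ∧ le2 x y)
include hle

lemma weight_filter_not_le [IsTrans α le1] {y : α} (hy : y ∈ S.filter (¬ x ≤ ·)) :
    weight le1 le2 S y = weight le1 le2 (S.filter (¬ x ≤ ·)) y := by
  refine weight_congr fun a _ hay => ?_
  rw [mem_filter, iff_self_and]
  intro ha hxa
  obtain ⟨hyS, hxy⟩ := mem_filter.1 hy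
  exact hxy ((hle x y).2 ⟨trans_of le1 ((hle x a).1 hxa).1 hay.1, hx y hyS⟩)

lemma weight_self [IsLinearOrder α le1] :
    weight le1 le2 S x = #(lowerSubsets (S.filter (¬ x ≤ ·))) := by
  unfold weight
  congr 2
  refine filter_congr fun a ha => ?_
  simp only [hle, hx a ha, and_true]
  constructor
  · rintro ⟨hax, hax'⟩ hxa
    exact hax (antisymm_of le1 hax' hxa)
  · intro hxa
    exact ⟨by rintro rfl; exact hxa (refl_of le1 a), (total_of le1 a x).resolve_right hxa⟩

end

theorem image_sum_weight_lowerSubsets [IsLinearOrder α le1] [IsLinearOrder α le2]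
    (hle : ∀ x y : α, x ≤ y ↔ le1 x y ∧ le2 x y) (S : Finset α) :
    (lowerSubsets S).image (fun A => ∑ a ∈ A, weight le1 le2 S a) = range #(lowerSubsets S) := by
  induction S using Finset.strongInduction with
  | H S ih =>
  rcases S.eq_empty_or_nonempty with rfl | hS
  · simp [lowerSubsets_empty]
  obtain ⟨x, hxS, hx⟩ := hS.exists_forall_rel le2
  have hmin : ∀ a ∈ S, a ≤ x → a = x := fun a ha hax =>
    antisymm_of le2 ((hle a x).1 hax).2 (hx a ha)
  have hW : S.filter (¬ x ≤ ·) ⊂ S := filter_ssubset.2 ⟨x, hxS, not_not.2 le_rfl⟩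
  have hlow : ((lowerSubsets S).filter (x ∉ ·)).image (fun A => ∑ a ∈ A, weight le1 le2 S a) =
      range #(lowerSubsets (S.filter (¬ x ≤ ·))) := by
    rw [filter_notMem_lowerSubsets hxS, ← ih _ hW]
    refine image_congr fun A hA => sum_congr rfl fun a ha => ?_
    exact weight_filter_not_le hx hle ((mem_lowerSubsets.1 hA).1 ha)
  have hhigh : ((lowerSubsets S).filter (x ∈ ·)).image (fun A => ∑ a ∈ A, weight le1 le2 S a) =
      (range #(lowerSubsets (S.erase x))).image (#(lowerSubsets (S.filter (¬ x ≤ ·))) + ·) := by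
    rw [filter_mem_lowerSubsets hxS hmin, image_image, ← ih _ (erase_ssubset hxS), image_image]
    refine image_congr fun E hE => ?_
    have hES := (mem_lowerSubsets.1 hE).1
    simp only [Function.comp_apply]
    rw [sum_insert fun hxE => notMem_erase x S (hES hxE), weight_self hx hle]
    exact congrArg _ (sum_congr rfl fun a ha => weight_erase hx (hES ha))
  calc (lowerSubsets S).image (fun A => ∑ a ∈ A, weight le1 le2 S a)
      = ((lowerSubsets S).filter (x ∉ ·)).image (fun A => ∑ a ∈ A, weight le1 le2 S a) ∪
          ((lowerSubsets S).filter (x ∈ ·)).image (fun A => ∑ a ∈ A, weight le1 le2 S a) := by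
        rw [← image_union, union_comm, filter_union_filter_not_eq]
    _ = range #(lowerSubsets S) := by
        rw [hlow, hhigh, card_lowerSubsets_eq_add hxS hmin, range_add, map_eq_image]
        rfl

end Realizer

lemma Finset.bijOn_Iio_of_image_eq_range {β : Type*} {s : Finset β} {f : β → ℕ}
    (h : s.image f = range #s) : Set.BijOn f s (Set.Iio #s) := by
  have hinj : Set.InjOn f s := injOn_of_card_image_eq (by rw [h, card_range])
  simpa only [← coe_image, h, coe_range] using hinj.bijOn_image

lemma bijOn_val_downSet :
    Set.BijOn (Subtype.val : DownSet P → Finset P) Set.univ ↑(lowerSubsets (univ : Finset P)) :=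
  ⟨fun A _ => mem_lowerSubsets_univ.2 A.2, Subtype.val_injective.injOn,
    fun A hA => ⟨⟨A, mem_lowerSubsets_univ.1 hA⟩, trivial, rfl⟩⟩

lemma card_downSet : Fintype.card (DownSet P) = #(lowerSubsets (univ : Finset P)) :=
  @Fintype.card_of_subtype _ (fun A : Finset P => IsLowerSet (A : Set P)) _
    (fun _ => mem_lowerSubsets_univ) (inferInstance : Fintype (DownSet P))

/-- Every finite poset of order dimension at most 2 has a downset lattice admitting
a bijective valuation. -/
theorem stmt9 (h : ∃ le1 le2 : P → P → Prop, IsRealizer le1 le2) :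
    ∃ w : P → ℕ, Set.BijOn (vval w) Set.univ {k | k < Fintype.card (DownSet P)} := by
  classical
  obtain ⟨le1, le2, h1, h2, hle⟩ := h
  rw [card_downSet]
  exact ⟨weight le1 le2 univ,
    (bijOn_Iio_of_image_eq_range (image_sum_weight_lowerSubsets hle univ)).comp bijOn_val_downSet⟩
end

section
/- Let P be a finite poset with realizer {Λ₁, Λ₂}, Q the complementary poset (x ≤' y iff x ≤_{Λ₁} y and y ≤_{Λ₂} x, or x = y), and w(x) the number of chains in Q with maximum x. Then the sum Σ_{x∈P} w(x) equals |L| - 1, the number of downsets of P minus 1, where L is the downset lattice of P; equivalently, the total number of nonempty chains in Q equals |L| - 1. -/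
open Finset

variable (P : Type*) [PartialOrder P] [Fintype P] [DecidableEq P]

variable {P}

variable [DecidableRel ((· ≤ ·) : P → P → Prop)]

section Aux
variable {α : Type*}

private lemma exists_rtop [DecidableEq α] {r : α → α → Prop} (htot : ∀ a b, r a b ∨ r b a)
    (htr : ∀ a b c, r a b → r b c → r a c) :
    ∀ C : Finset α, C.Nonempty → ∃ y ∈ C, ∀ a ∈ C, r a y := by
  intro C
  induction C using Finset.induction_on with
  | empty => rintro ⟨x, hx⟩; exact absurd hx (Finset.notMem_empty x)
  | @insert a s ha ih =>
    intro _
    rcases s.eq_empty_or_nonempty with rfl | hs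
    · refine ⟨a, Finset.mem_insert_self a _, ?_⟩
      intro b hb
      rcases Finset.mem_insert.1 hb with rfl | hb
      · exact (htot b b).elim id id
      · exact absurd hb (Finset.notMem_empty b)
    · obtain ⟨y, hy, hty⟩ := ih hs
      rcases htot a y with hay | hya
      · refine ⟨y, Finset.mem_insert_of_mem hy, ?_⟩
        intro b hb
        rcases Finset.mem_insert.1 hb with rfl | hb
        · exact hay
        · exact hty b hb
      · refine ⟨a, Finset.mem_insert_self a _, ?_⟩
        intro b hb
        rcases Finset.mem_insert.1 hb with rfl | hb
        · exact (htot b b).elim id id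
        · exact htr b y a (hty b hb) hya

private lemma exists_maximal_above [PartialOrder α] [DecidableEq α] (D : Finset α) {d : α}
    (hd : d ∈ D) : ∃ m ∈ D, d ≤ m ∧ ∀ b ∈ D, m ≤ b → m = b := by
  classical
  obtain ⟨m, hm, hmax⟩ := (D.filter (fun x => d ≤ x)).exists_maximal ⟨d, by simp [hd]⟩
  simp only [Finset.mem_filter] at hm
  refine ⟨m, hm.1, hm.2, ?_⟩
  intro b hb hmb
  by_contra hne
  exact hne (le_antisymm hmb (hmax (Finset.mem_filter.2 ⟨hb, hm.2.trans hmb⟩) hmb))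

end Aux

open Classical in
/-- The downward closure of a finite set, as a downset. -/
private noncomputable def dcl (C : Finset P) : DownSet P :=
  ⟨univ.filter (fun z => ∃ a ∈ C, z ≤ a), by
    intro a b hba ha
    simp only [coe_filter, Set.mem_setOf_eq, mem_univ, true_and] at *
    obtain ⟨c, hc, hac⟩ := ha
    exact ⟨c, hc, hba.trans hac⟩⟩

private lemma mem_dcl {C : Finset P} {z : P} : z ∈ (dcl C).1 ↔ ∃ a ∈ C, z ≤ a := by
  simp [dcl]

private lemma bot_val : ((⊥ : DownSet P)).1 = ∅ := rfl

/-- The total weight (number of nonempty chains in the complementary poset) equals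
the number of downsets of `P` minus 1. -/
theorem stmt10 (le1 le2 : P → P → Prop) (h : IsRealizer le1 le2) :
    ∑ x : P, chainCount le1 le2 x = Fintype.card (DownSet P) - 1 := by
  classical
  obtain ⟨hl1, hl2, hle⟩ := h
  haveI := hl1; haveI := hl2
  have r_refl : ∀ a : P, le'' le1 le2 a a :=
    fun a => ⟨(total_of le1 a a).elim id id, (total_of le2 a a).elim id id⟩
  have key : ∀ C : Finset P,
      (∀ a ∈ C, ∀ b ∈ C, le'' le1 le2 a b ∨ le'' le1 le2 b a) ↔
      (∀ a ∈ C, ∀ b ∈ C, a ≤ b → a = b) := by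
    intro C
    constructor
    · intro hch a ha b hb hab
      rcases hch a ha b hb with ⟨h1, h2⟩ | ⟨h1, h2⟩
      · exact antisymm_of le2 ((hle a b).1 hab).2 h2
      · exact antisymm_of le1 ((hle a b).1 hab).1 h1
    · intro hac a ha b hb
      by_cases hab : a = b
      · subst hab; exact Or.inl (r_refl a)
      rcases total_of le1 a b with h1 | h1
      · refine Or.inl ⟨h1, ?_⟩
        rcases total_of le2 b a with h2 | h2
        · exact h2
        · exact absurd (hac a ha b hb ((hle a b).2 ⟨h1, h2⟩)) hab
      · refine Or.inr ⟨h1, ?_⟩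
        rcases total_of le2 a b with h2 | h2
        · exact h2
        · exact absurd ((hac b hb a ha ((hle b a).2 ⟨h1, h2⟩)).symm) hab
  rcases isEmpty_or_nonempty P with hP | hP
  · have h1 : Fintype.card (DownSet P) = 1 := by
      refine Fintype.card_eq_one_iff.2 ⟨⊥, fun A => ?_⟩
      apply Subtype.ext
      rw [bot_val]
      exact Finset.eq_empty_of_isEmpty _
    simp [h1]
  set S : Finset (Finset P) := univ.filter
    (fun C => C.Nonempty ∧ ∀ a ∈ C, ∀ b ∈ C, le'' le1 le2 a b ∨ le'' le1 le2 b a) with hS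
  have hmemS : ∀ C : Finset P, C ∈ S ↔
      (C.Nonempty ∧ ∀ a ∈ C, ∀ b ∈ C, le'' le1 le2 a b ∨ le'' le1 le2 b a) := by
    intro C; rw [hS, mem_filter]; simp
  have htop : ∀ C ∈ S, ∃ y ∈ C, ∀ a ∈ C, le1 a y := by
    intro C hC
    exact exists_rtop (total_of le1) (fun a b c => trans_of le1) C ((hmemS C).1 hC).1
  set m : Finset P → P := fun C =>
    if hC : ∃ y ∈ C, ∀ a ∈ C, le1 a y then hC.choose else Classical.arbitrary P with hm
  have hmspec : ∀ C ∈ S, m C ∈ C ∧ ∀ a ∈ C, le1 a (m C) := by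
    intro C hC
    have hQ := htop C hC
    rw [hm]
    simp only
    rw [dif_pos hQ]
    obtain ⟨h1, h2⟩ := hQ.choose_spec
    exact ⟨h1, h2⟩
  have hfiber : ∀ x : P, chainCount le1 le2 x = (S.filter (fun C => m C = x)).card := by
    intro x
    rw [chainCount]
    have hset : {C : Finset P | x ∈ C ∧ (∀ a ∈ C, le'' le1 le2 a x) ∧
        ∀ a ∈ C, ∀ b ∈ C, le'' le1 le2 a b ∨ le'' le1 le2 b a}
        = ↑(S.filter (fun C => m C = x)) := by
      ext C
      simp only [Set.mem_setOf_eq, Finset.coe_filter, Finset.mem_coe]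
      constructor
      · rintro ⟨hx, hax, hch⟩
        have hCS : C ∈ S := (hmemS C).2 ⟨⟨x, hx⟩, hch⟩
        obtain ⟨hmC, hmtop⟩ := hmspec C hCS
        exact ⟨hCS, antisymm_of le1 (hax (m C) hmC).1 (hmtop x hx)⟩
      · rintro ⟨hCS, hmx⟩
        obtain ⟨hne, hch⟩ := (hmemS C).1 hCS
        obtain ⟨hmC, hmtop⟩ := hmspec C hCS
        rw [hmx] at hmC hmtop
        refine ⟨hmC, ?_, hch⟩
        intro a ha
        rcases hch a ha x hmC with hax | ⟨h1, h2⟩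
        · exact hax
        · have hax2 : a = x := antisymm_of le1 (hmtop a ha) h1
          subst hax2; exact r_refl a
    rw [hset, Set.ncard_coe_finset]
  have hsum : ∑ x : P, chainCount le1 le2 x = S.card := by
    rw [Finset.card_eq_sum_card_fiberwise (f := m) (t := univ) (fun C _ => mem_univ _)]
    exact Finset.sum_congr rfl fun x _ => hfiber x
  rw [hsum]
  have hS2 : S = univ.filter
      (fun C : Finset P => C.Nonempty ∧ ∀ a ∈ C, ∀ b ∈ C, a ≤ b → a = b) := by
    rw [hS]
    apply Finset.filter_congr
    intro C _
    rw [key C]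
  rw [hS2]
  have hsub : ∀ C₁ C₂ : Finset P, (∀ a ∈ C₁, ∀ b ∈ C₁, a ≤ b → a = b) →
      dcl C₁ = dcl C₂ → C₁ ⊆ C₂ := by
    intro C₁ C₂ hac he a ha
    have ha2 : a ∈ (dcl C₂).1 := by
      rw [← he]; exact mem_dcl.2 ⟨a, ha, le_refl a⟩
    obtain ⟨b, hb, hab⟩ := mem_dcl.1 ha2
    have hb1 : b ∈ (dcl C₁).1 := by
      rw [he]; exact mem_dcl.2 ⟨b, hb, le_refl b⟩
    obtain ⟨c, hc, hbc⟩ := mem_dcl.1 hb1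
    have hac2 : a = c := hac a ha c hc (hab.trans hbc)
    have hab2 : a = b := le_antisymm hab (hac2 ▸ hbc)
    exact hab2 ▸ hb
  have hbij : (univ.filter
        (fun C : Finset P => C.Nonempty ∧ ∀ a ∈ C, ∀ b ∈ C, a ≤ b → a = b)).card
      = (univ.filter (fun A : DownSet P => A ≠ ⊥)).card := by
    refine Finset.card_bij (fun C _ => dcl C) ?_ ?_ ?_
    · intro C hC
      rw [mem_filter] at hC
      obtain ⟨a, ha⟩ := hC.2.1
      refine mem_filter.2 ⟨mem_univ _, ?_⟩
      intro hbot
      have hbot' : dcl C = ⊥ := hbot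
      have hmem : a ∈ (dcl C).1 := mem_dcl.2 ⟨a, ha, le_refl a⟩
      rw [hbot', bot_val] at hmem
      exact absurd hmem (Finset.notMem_empty a)
    · intro C₁ h₁ C₂ h₂ he
      rw [mem_filter] at h₁ h₂
      exact Finset.Subset.antisymm (hsub C₁ C₂ h₁.2.2 he) (hsub C₂ C₁ h₂.2.2 he.symm)
    · intro A hA
      rw [mem_filter] at hA
      have hAne : A.1.Nonempty := by
        rcases A.1.eq_empty_or_nonempty with he | hne
        · exact absurd (Subtype.ext (he.trans bot_val.symm)) hA.2
        · exact hne
      refine ⟨A.1.filter (fun a => ∀ b ∈ A.1, a ≤ b → a = b),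
        mem_filter.2 ⟨mem_univ _, ?_, ?_⟩, ?_⟩
      · obtain ⟨d, hd⟩ := hAne
        obtain ⟨m', hm', _, hmax⟩ := exists_maximal_above A.1 hd
        exact ⟨m', mem_filter.2 ⟨hm', hmax⟩⟩
      · intro a ha b hb hab
        exact (mem_filter.1 ha).2 b (mem_filter.1 hb).1 hab
      · apply Subtype.ext
        ext z
        rw [mem_dcl]
        constructor
        · rintro ⟨a, ha, hza⟩
          exact Finset.mem_coe.1 (A.2 hza (Finset.mem_coe.2 (mem_filter.1 ha).1))
        · intro hz
          obtain ⟨m', hm', hzm, hmax⟩ := exists_maximal_above A.1 hz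
          exact ⟨m', mem_filter.2 ⟨hm', hmax⟩, hzm⟩
  rw [hbij, Finset.filter_ne' univ (⊥ : DownSet P), Finset.card_erase_of_mem (mem_univ _),
    Finset.card_univ]
end

section
/- Let P be a finite poset of dimension at most 2 with realizer {Λ₁, Λ₂}, Q the complementary poset, and v the valuation on the downset lattice L given by weights w(x) = number of chains in Q with maximum x. Enumerate P as x₁ <₁ x₂ <₁ … <₁ x_k according to Λ₁, and define Ω(A) ∈ {0,1}^k by Ω(A)_j = 1 iff x_j ∈ A. Then for all A, B ∈ L, v(A) ≤ v(B) if and only if Ω(A) ≤ Ω(B) in the lexicographic order on {0,1}^k with coordinates compared from index k down to 1; that is, the ordering of L by v coincides with the lexicographic order induced by Ω. -/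
open Finset

variable (P : Type*) [PartialOrder P] [Fintype P] [DecidableEq P]

variable {P}

variable [DecidableRel ((· ≤ ·) : P → P → Prop)]

section Aux

variable {le1 le2 : P → P → Prop}

/-- Finset version of the set of chains with maximum `y`. -/
noncomputable def chainsF (le1 le2 : P → P → Prop) (y : P) : Finset (Finset P) :=
  (Set.toFinite {C : Finset P | y ∈ C ∧ (∀ a ∈ C, le'' le1 le2 a y) ∧
    ∀ a ∈ C, ∀ b ∈ C, le'' le1 le2 a b ∨ le'' le1 le2 b a}).toFinset

lemma mem_chainsF {y : P} {C : Finset P} :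
    C ∈ chainsF le1 le2 y ↔ y ∈ C ∧ (∀ a ∈ C, le'' le1 le2 a y) ∧
      ∀ a ∈ C, ∀ b ∈ C, le'' le1 le2 a b ∨ le'' le1 le2 b a := by
  simp [chainsF]

lemma chainCount_eq (y : P) :
    chainCount le1 le2 y = (chainsF le1 le2 y).card := by
  rw [chainCount, chainsF, Set.ncard_eq_toFinset_card]

lemma exists_rel_max (r : P → P → Prop) (htot : ∀ a b, r a b ∨ r b a)
    (htrans : ∀ a b c, r a b → r b c → r a c)
    (s : Finset P) (hs : s.Nonempty) : ∃ z ∈ s, ∀ u ∈ s, r u z := by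
  have hr : ∀ a : P, r a a := fun a => by rcases htot a a with h | h <;> exact h
  revert hs
  induction s using Finset.induction_on with
  | empty => intro hs; exact absurd hs (by simp)
  | @insert a s ha ih =>
      intro _
      rcases s.eq_empty_or_nonempty with rfl | hs'
      · refine ⟨a, Finset.mem_insert_self a _, fun u hu => ?_⟩
        simp only [Finset.mem_insert, Finset.notMem_empty, or_false] at hu
        rw [hu]; exact hr a
      · obtain ⟨z, hz, hmax⟩ := ih hs'
        rcases htot a z with hc | hc
        · refine ⟨z, Finset.mem_insert_of_mem hz, fun u hu => ?_⟩
          rcases Finset.mem_insert.mp hu with hu' | hu'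
          · rw [hu']; exact hc
          · exact hmax u hu'
        · refine ⟨a, Finset.mem_insert_self a s, fun u hu => ?_⟩
          rcases Finset.mem_insert.mp hu with hu' | hu'
          · rw [hu']; exact hr a
          · exact htrans _ _ _ (hmax u hu') hc

lemma sum_chainCount_lt (h : IsRealizer le1 le2) (z : P) (S : Finset P)
    (hS : ∀ x ∈ S, le'' le1 le2 x z ∧ x ≠ z) :
    ∑ x ∈ S, chainCount le1 le2 x < chainCount le1 le2 z := by
  haveI := h.1; haveI := h.2.1
  have hrefl : ∀ a : P, le'' le1 le2 a a := fun a => ⟨refl_of le1 a, refl_of le2 a⟩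
  have htr : ∀ {a b c : P}, le'' le1 le2 a b → le'' le1 le2 b c → le'' le1 le2 a c :=
    fun hab hbc => ⟨_root_.trans_of le1 hab.1 hbc.1, _root_.trans_of le2 hbc.2 hab.2⟩
  have hanti : ∀ {a b : P}, le'' le1 le2 a b → le'' le1 le2 b a → a = b :=
    fun h1 h2 => antisymm_of le1 h1.1 h2.1
  -- z is not in any chain with max x, for x ∈ S
  have hznot : ∀ x ∈ S, ∀ C ∈ chainsF le1 le2 x, z ∉ C := by
    intro x hx C hC hzC
    obtain ⟨-, hall, -⟩ := mem_chainsF.mp hC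
    exact (hS x hx).2 (hanti (hS x hx).1 (hall z hzC))
  set U : Finset (Finset P) :=
    S.biUnion (fun x => (chainsF le1 le2 x).image (insert z)) with hU
  have hcardim : ∀ x ∈ S, ((chainsF le1 le2 x).image (insert z)).card
      = (chainsF le1 le2 x).card := by
    intro x hx
    apply Finset.card_image_of_injOn
    intro C hC C' hC' hCC'
    have h1 := hznot x hx C hC
    have h2 := hznot x hx C' hC'
    have := congrArg (fun D => Finset.erase D z) hCC'
    simpa [Finset.erase_insert h1, Finset.erase_insert h2] using this
  have hdisj : ∀ x ∈ S, ∀ y ∈ S, x ≠ y →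
      Disjoint ((chainsF le1 le2 x).image (insert z))
        ((chainsF le1 le2 y).image (insert z)) := by
    intro x hx y hy hxy
    rw [Finset.disjoint_left]
    rintro D hDx hDy
    obtain ⟨C, hC, rfl⟩ := Finset.mem_image.mp hDx
    obtain ⟨C', hC', hCC'⟩ := Finset.mem_image.mp hDy
    have h1 := hznot x hx C hC
    have h2 := hznot y hy C' hC'
    have hCeq : C' = C := by
      have := congrArg (fun D => Finset.erase D z) hCC'
      simpa [Finset.erase_insert h1, Finset.erase_insert h2] using this
    obtain ⟨hxC, hallx, -⟩ := mem_chainsF.mp hC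
    obtain ⟨hyC', hally, -⟩ := mem_chainsF.mp hC'
    rw [hCeq] at hyC' hally
    exact hxy (hanti (hally x hxC) (hallx y hyC'))
  have hcardU : U.card = ∑ x ∈ S, chainCount le1 le2 x := by
    rw [hU, Finset.card_biUnion hdisj]
    exact Finset.sum_congr rfl (fun x hx => by rw [hcardim x hx, chainCount_eq])
  have hsub : insert ({z} : Finset P) U ⊆ chainsF le1 le2 z := by
    intro D hD
    rcases Finset.mem_insert.mp hD with hDz | hD
    · rw [hDz]
      refine mem_chainsF.mpr ⟨mem_singleton_self z, ?_, ?_⟩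
      · intro a ha
        rw [mem_singleton] at ha
        rw [ha]; exact hrefl z
      · intro a ha b hb
        rw [mem_singleton] at ha hb
        rw [ha, hb]; exact Or.inl (hrefl z)
    · obtain ⟨x, hx, C, hC, rfl⟩ := by
        simpa [hU, Finset.mem_biUnion, Finset.mem_image] using hD
      obtain ⟨hxC, hall, hch⟩ := mem_chainsF.mp hC
      have hmem : ∀ a ∈ insert z C, le'' le1 le2 a z := by
        intro a ha
        rcases Finset.mem_insert.mp ha with ha' | ha'
        · rw [ha']; exact hrefl z
        · exact htr (hall a ha') (hS x hx).1
      refine mem_chainsF.mpr ⟨Finset.mem_insert_self z C, hmem, ?_⟩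
      intro a ha b hb
      rcases Finset.mem_insert.mp ha with ha' | ha'
      · exact Or.inr (by rw [ha']; exact hmem b hb)
      · rcases Finset.mem_insert.mp hb with hb' | hb'
        · exact Or.inl (by rw [hb']; exact hmem a ha)
        · exact hch a ha' b hb' 
  have hzU : ({z} : Finset P) ∉ U := by
    intro hzmem
    obtain ⟨x, hx, C, hC, heq⟩ := by
      simpa [hU, Finset.mem_biUnion, Finset.mem_image] using hzmem
    obtain ⟨hxC, -, -⟩ := mem_chainsF.mp hC
    have : x ∈ insert z C := Finset.mem_insert_of_mem hxC
    rw [heq, mem_singleton] at this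
    exact (hS x hx).2 this
  calc ∑ x ∈ S, chainCount le1 le2 x = U.card := hcardU.symm
    _ < (insert ({z} : Finset P) U).card := by
        rw [Finset.card_insert_of_notMem hzU]; omega
    _ ≤ (chainsF le1 le2 z).card := Finset.card_le_card hsub
    _ = chainCount le1 le2 z := (chainCount_eq z).symm

lemma vval_lt_of_max (h : IsRealizer le1 le2) {A B : DownSet P} {z : P}
    (hzB : z ∈ B.1) (hzA : z ∉ A.1)
    (hmax : ∀ u, le1 z u → u ≠ z → (u ∈ A.1 ↔ u ∈ B.1)) :
    vval (chainCount le1 le2) A < vval (chainCount le1 le2) B := by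
  haveI := h.1; haveI := h.2.1
  have key : ∀ x ∈ A.1 \ B.1, le'' le1 le2 x z ∧ x ≠ z := by
    intro x hx
    rw [Finset.mem_sdiff] at hx
    have hxz : x ≠ z := fun e => hzA (e ▸ hx.1)
    have hnle : ¬ x ≤ z := fun hle => hx.2 (B.2 hle (Finset.mem_coe.mpr hzB))
    have h1xz : le1 x z := by
      rcases total_of le1 x z with h' | h'
      · exact h'
      · exact absurd ((hmax x h' hxz).mp hx.1) hx.2
    have h2zx : le2 z x := by
      rcases total_of le2 z x with h' | h'
      · exact h'
      · exact absurd ((h.2.2 x z).mpr ⟨h1xz, h'⟩) hnle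
    exact ⟨⟨h1xz, h2zx⟩, hxz⟩
  have hlt : ∑ x ∈ A.1 \ B.1, chainCount le1 le2 x < chainCount le1 le2 z :=
    sum_chainCount_lt h z _ key
  have hle : chainCount le1 le2 z ≤ ∑ x ∈ B.1 \ A.1, chainCount le1 le2 x :=
    Finset.single_le_sum (fun _ _ => Nat.zero_le _)
      (Finset.mem_sdiff.mpr ⟨hzB, hzA⟩)
  have e1 : ∑ x ∈ A.1 ∩ B.1, chainCount le1 le2 x
      + ∑ x ∈ A.1 \ B.1, chainCount le1 le2 x = vval (chainCount le1 le2) A :=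
    Finset.sum_inter_add_sum_sdiff _ _ _
  have e2 : ∑ x ∈ B.1 ∩ A.1, chainCount le1 le2 x
      + ∑ x ∈ B.1 \ A.1, chainCount le1 le2 x = vval (chainCount le1 le2) B :=
    Finset.sum_inter_add_sum_sdiff _ _ _
  rw [Finset.inter_comm] at e2
  omega

end Aux

/-- The ordering of downsets by the chain-counting valuation coincides with the
lexicographic order on characteristic vectors (highest `Λ₁`-coordinate first):
`v(A) ≤ v(B)` iff `A = B` or the `Λ₁`-greatest element of the symmetric difference
of `A` and `B` belongs to `B`. -/
theorem stmt11 (le1 le2 : P → P → Prop) (h : IsRealizer le1 le2)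
    (A B : DownSet P) :
    vval (chainCount le1 le2) A ≤ vval (chainCount le1 le2) B ↔
      (A = B ∨ ∃ z, z ∈ B.1 ∧ z ∉ A.1 ∧
        ∀ u, le1 z u → u ≠ z → (u ∈ A.1 ↔ u ∈ B.1)) := by
  haveI := h.1; haveI := h.2.1
  constructor
  · intro hv
    by_cases hAB : A = B
    · exact Or.inl hAB
    right
    have hne : ((A.1 \ B.1) ∪ (B.1 \ A.1)).Nonempty := by
      rw [Finset.nonempty_iff_ne_empty]
      intro hemp
      rw [Finset.union_eq_empty, Finset.sdiff_eq_empty_iff_subset,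
        Finset.sdiff_eq_empty_iff_subset] at hemp
      exact hAB (Subtype.ext (Finset.Subset.antisymm hemp.1 hemp.2))
    obtain ⟨z, hz, hzmax⟩ := exists_rel_max le1 (fun a b => total_of le1 a b)
      (fun a b c hab hbc => _root_.trans_of le1 hab hbc) _ hne
    have hmaxprop : ∀ u, le1 z u → u ≠ z → (u ∈ A.1 ↔ u ∈ B.1) := by
      intro u hzu hu
      by_contra hne'
      have hmem : u ∈ (A.1 \ B.1) ∪ (B.1 \ A.1) := by
        rw [Finset.mem_union, Finset.mem_sdiff, Finset.mem_sdiff]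
        tauto
      exact hu (antisymm_of le1 (hzmax u hmem) hzu)
    rcases Finset.mem_union.mp hz with hz' | hz'
    · rw [Finset.mem_sdiff] at hz'
      have := vval_lt_of_max h (A := B) (B := A) hz'.1 hz'.2
        (fun u h1 h2 => (hmaxprop u h1 h2).symm)
      omega
    · rw [Finset.mem_sdiff] at hz'
      exact ⟨z, hz'.1, hz'.2, hmaxprop⟩
  · rintro (rfl | ⟨z, hzB, hzA, hmax⟩)
    · exact le_refl _
    · exact (vval_lt_of_max h hzB hzA hmax).le
end
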